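/- Let Λ ⊆ ℝ^m × ℝ^r × ℝ be a nonempty closed convex set containing no vertical lines, and let (z',y',w') ∉ Λ. Then there exists a nonvertical hyperplane strictly separating (z',y',w') from Λ: i.e., there exist ν ∈ ℝ^m, γ ∈ ℝ^r, δ ≠ 0, η ∈ ℝ with ν·z' + γ·y' + δw' < η and ν·z + γ·y + δw > η for all (z,y,w) ∈ Λ. -/
import Mathlib


open Finset

private lemma clm_repr (m r : ℕ)
    (F : ((Fin m → ℝ) × (Fin r → ℝ) × ℝ) →L[ℝ] ℝ)
    (q : (Fin m → ℝ) × (Fin r → ℝ) × ℝ) :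
    F q = (∑ i, F (Pi.single i 1, 0, 0) * q.1 i)
        + (∑ j, F ((0 : Fin m → ℝ), Pi.single j 1, 0) * q.2.1 j)
        + F ((0 : Fin m → ℝ), (0 : Fin r → ℝ), (1:ℝ)) * q.2.2 := by
  have hdecomp : q = (∑ i, q.1 i • ((Pi.single i 1 : Fin m → ℝ), (0 : Fin r → ℝ), (0:ℝ)))
      + (∑ j, q.2.1 j • ((0 : Fin m → ℝ), (Pi.single j 1 : Fin r → ℝ), (0:ℝ)))
      + q.2.2 • ((0 : Fin m → ℝ), (0 : Fin r → ℝ), (1:ℝ)) := by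
    have h1 : q.1 = ∑ i, q.1 i • (Pi.single i 1 : Fin m → ℝ) := by
      ext k
      simp [Pi.single_apply, Finset.sum_apply, mul_comm]
    have h2 : q.2.1 = ∑ j, q.2.1 j • (Pi.single j 1 : Fin r → ℝ) := by
      ext k
      simp [Pi.single_apply, Finset.sum_apply, mul_comm]
    refine Prod.ext ?_ (Prod.ext ?_ ?_) <;>
      simp [Prod.fst_sum, Prod.snd_sum, ← h1, ← h2]
  calc F q = F ((∑ i, q.1 i • ((Pi.single i 1 : Fin m → ℝ), (0 : Fin r → ℝ), (0:ℝ)))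
      + (∑ j, q.2.1 j • ((0 : Fin m → ℝ), (Pi.single j 1 : Fin r → ℝ), (0:ℝ)))
      + q.2.2 • ((0 : Fin m → ℝ), (0 : Fin r → ℝ), (1:ℝ))) := by rw [← hdecomp]
    _ = _ := by
      have hFs : ∀ (v : (Fin m → ℝ) × (Fin r → ℝ) × ℝ) (c : ℝ), F (c • v) = F v * c :=
        fun v c => by rw [map_smul, smul_eq_mul, mul_comm]
      simp only [map_add, map_sum, hFs]

theorem nonvertical_hyperplane_strict_separation
    (m r : ℕ) (Λ : Set ((Fin m → ℝ) × (Fin r → ℝ) × ℝ))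
    (hne : Λ.Nonempty) (hcl : IsClosed Λ) (hconv : Convex ℝ Λ)
    (hnovert : ∀ q ∈ Λ, ¬ (∀ s : ℝ, (q.1, q.2.1, q.2.2 + s) ∈ Λ))
    (q' : (Fin m → ℝ) × (Fin r → ℝ) × ℝ) (hq' : q' ∉ Λ) :
    ∃ (ν : Fin m → ℝ) (γ : Fin r → ℝ) (δ η : ℝ), δ ≠ 0 ∧
      (∑ i, ν i * q'.1 i) + (∑ j, γ j * q'.2.1 j) + δ * q'.2.2 < η ∧
      ∀ q ∈ Λ,
        (∑ i, ν i * q.1 i) + (∑ j, γ j * q.2.1 j) + δ * q.2.2 > η := by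
  set e : (Fin m → ℝ) × (Fin r → ℝ) × ℝ := ((0 : Fin m → ℝ), (0 : Fin r → ℝ), (1:ℝ)) with he
  -- generic step: from a nonvertical strictly separating functional, conclude
  have key : ∀ (F : ((Fin m → ℝ) × (Fin r → ℝ) × ℝ) →L[ℝ] ℝ) (η' : ℝ),
      F e ≠ 0 → F q' < η' → (∀ q ∈ Λ, η' < F q) →
      ∃ (ν : Fin m → ℝ) (γ : Fin r → ℝ) (δ η : ℝ), δ ≠ 0 ∧
        (∑ i, ν i * q'.1 i) + (∑ j, γ j * q'.2.1 j) + δ * q'.2.2 < η ∧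
        ∀ q ∈ Λ,
          (∑ i, ν i * q.1 i) + (∑ j, γ j * q.2.1 j) + δ * q.2.2 > η := by
    intro F η' hδ hq'F hΛF
    refine ⟨fun i => F (Pi.single i 1, 0, 0), fun j => F (0, Pi.single j 1, 0), F e, η',
      hδ, ?_, ?_⟩
    · rw [← clm_repr m r F q']; exact hq'F
    · intro q hq; rw [← clm_repr m r F q]; exact hΛF q hq
  obtain ⟨q₀, hq₀⟩ := hne
  obtain ⟨s, hs⟩ := not_forall.mp (hnovert q₀ hq₀)
  obtain ⟨g, α, hgp, hgΛ⟩ := geometric_hahn_banach_point_closed hconv hcl hs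
  obtain ⟨f, η, hfq', hfΛ⟩ := geometric_hahn_banach_point_closed hconv hcl hq'
  have hp : (q₀.1, q₀.2.1, q₀.2.2 + s) = q₀ + s • e := by
    refine Prod.ext ?_ (Prod.ext ?_ ?_) <;> simp [he, mul_comm]
  have hge : g e ≠ 0 := by
    have h1 : g q₀ + s * g e < α := by
      have := hgp
      rwa [hp, map_add, map_smul, smul_eq_mul] at this
    have h2 : α < g q₀ := hgΛ q₀ hq₀
    intro h
    rw [h, mul_zero] at h1
    linarith
  by_cases hfe : f e ≠ 0
  · exact key f η hfe hfq' hfΛ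
  · push_neg at hfe
    set ε : ℝ := if g q' ≤ α then 1 else (η - f q') / (2 * (g q' - α)) with hε
    have hεpos : 0 < ε := by
      rw [hε]
      split_ifs with h
      · norm_num
      · push_neg at h
        apply div_pos (by linarith) (by linarith)
    have hcomb : f q' + ε * g q' < η + ε * α := by
      rw [hε]
      split_ifs with h
      · nlinarith
      · push_neg at h
        have hc : 0 < g q' - α := by linarith
        have hd : 0 < η - f q' := by linarith
        have hkey : (η - f q') / (2 * (g q' - α)) * (g q' - α) = (η - f q') / 2 := by
          field_simp
        nlinarith [hkey]
    refine key (f + ε • g) (η + ε * α) ?_ ?_ ?_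
    · simp only [ContinuousLinearMap.add_apply, ContinuousLinearMap.smul_apply, hfe,
        smul_eq_mul, zero_add]
      exact mul_ne_zero (ne_of_gt hεpos) hge
    · simpa [smul_eq_mul] using hcomb
    · intro q hq
      have h1 := hfΛ q hq
      have h2 := hgΛ q hq
      simp only [ContinuousLinearMap.add_apply, ContinuousLinearMap.smul_apply, smul_eq_mul]
      nlinarith
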